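/- (Finite-sum congruence behind equation (26)) Let χ be a nontrivial Dirichlet character modulo p with values in ℤ_p. Then for all integers n ≥ 0 and N ≥ 0, the difference ∑_{x=0}^{p^{N+1} − 1} χ(x)(−1)^x [x]_q^n − ∑_{a=0}^{p−1} χ(a)(−1)^a [a]_q^n is divisible by [p]_q in ℤ_p. -/
import Mathlib
set_option synthInstance.maxHeartbeats 1000000
set_option maxHeartbeats 1000000

/-- The `q`-analogue `[x]_q = 1 + q + ⋯ + q^(x-1)` in `ℤ_p`. -/
noncomputable def qnum {p : ℕ} [Fact p.Prime] (q : ℤ_[p]) (x : ℕ) : ℤ_[p] :=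
  ∑ l ∈ Finset.range x, q ^ l

lemma qnum_add {p : ℕ} [Fact p.Prime] (q : ℤ_[p]) (a b : ℕ) :
    qnum q (a + b) = qnum q a + q ^ a * qnum q b := by
  simp [qnum, Finset.sum_range_add, Finset.mul_sum, pow_add]

lemma dvd_qnum_mul {p : ℕ} [Fact p.Prime] (q : ℤ_[p]) (k : ℕ) :
    qnum q p ∣ qnum q (p * k) := by
  induction k with
  | zero => simp [qnum]
  | succ k ih =>
    rw [Nat.mul_succ, qnum_add]
    exact dvd_add ih (dvd_mul_left _ _)

lemma dvd_pow_sub_one {p : ℕ} [Fact p.Prime] (q : ℤ_[p]) (k : ℕ) :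
    qnum q p ∣ q ^ (p * k) - 1 := by
  have h1 : qnum q p ∣ q ^ p - 1 := ⟨q - 1, (geom_sum_mul q p).symm⟩
  have h2 : q ^ p - 1 ∣ (q ^ p) ^ k - 1 ^ k := sub_dvd_pow_sub_pow _ _ _
  rw [one_pow, ← pow_mul] at h2
  exact h1.trans h2

lemma dvd_qnum_sub {p : ℕ} [Fact p.Prime] (q : ℤ_[p]) (k x : ℕ) :
    qnum q p ∣ qnum q (p * k + x) - qnum q x := by
  rw [qnum_add]
  have : qnum q (p * k) + q ^ (p * k) * qnum q x - qnum q x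
      = qnum q (p * k) + (q ^ (p * k) - 1) * qnum q x := by ring
  rw [this]
  exact dvd_add (dvd_qnum_mul q k) ((dvd_pow_sub_one q k).mul_right _)

/-- **Finite-sum congruence behind equation (26).** For a nontrivial Dirichlet character
`χ` modulo `p` and all `n, N ≥ 0`,
`∑_{x=0}^{p^{N+1}−1} χ(x)(−1)^x [x]_q^n ≡ ∑_{a=0}^{p−1} χ(a)(−1)^a [a]_q^n (mod [p]_q)`. -/
theorem eq26_finite (p : ℕ) [Fact p.Prime] (hp : Odd p)
    (q : ℤ_[p]) (hq : (p : ℤ_[p]) ∣ (q - 1))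
    (χ : DirichletCharacter ℤ_[p] p) (hχ : χ ≠ 1)
    (n N : ℕ) :
    qnum q p ∣
      (∑ x ∈ Finset.range (p ^ (N + 1)),
        χ (x : ZMod p) * (-1 : ℤ_[p]) ^ x * (qnum q x) ^ n)
        - ∑ a ∈ Finset.range p, χ (a : ZMod p) * (-1 : ℤ_[p]) ^ a * (qnum q a) ^ n := by
  set I := Ideal.span {qnum q p}
  set φ := Ideal.Quotient.mk I
  rw [← Ideal.mem_span_singleton, ← Ideal.Quotient.eq_zero_iff_mem]
  rw [map_sub, sub_eq_zero, map_sum, map_sum]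
  have key : ∀ k : ℕ,
      ∑ x ∈ Finset.range (p * k), φ (χ (x : ZMod p) * (-1 : ℤ_[p]) ^ x * (qnum q x) ^ n)
      = (∑ m ∈ Finset.range k, (-1 : ℤ_[p] ⧸ I) ^ m) *
        ∑ a ∈ Finset.range p, φ (χ (a : ZMod p) * (-1 : ℤ_[p]) ^ a * (qnum q a) ^ n) := by
    intro k
    induction k with
    | zero => simp
    | succ k ih =>
      rw [Nat.mul_succ, Finset.sum_range_add, ih, Finset.sum_range_succ]
      have hterm : ∀ x : ℕ,
          φ (χ ((p * k + x : ℕ) : ZMod p) * (-1 : ℤ_[p]) ^ (p * k + x) * (qnum q (p * k + x)) ^ n)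
          = (-1 : ℤ_[p] ⧸ I) ^ k *
            φ (χ (x : ZMod p) * (-1 : ℤ_[p]) ^ x * (qnum q x) ^ n) := by
        intro x
        have hcast : ((p * k + x : ℕ) : ZMod p) = (x : ZMod p) := by
          push_cast [ZMod.natCast_self]; ring
        have hsign : ((-1 : ℤ_[p]) ^ (p * k + x)) = (-1) ^ k * (-1) ^ x := by
          rw [pow_add, pow_mul, hp.neg_one_pow]
        have hqn : φ (qnum q (p * k + x)) = φ (qnum q x) := by
          rw [Ideal.Quotient.eq, Ideal.mem_span_singleton]
          exact dvd_qnum_sub q k x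
        rw [hcast, hsign]
        simp only [map_mul, map_pow, hqn, map_neg, map_one]
        ring
      calc (∑ m ∈ Finset.range k, (-1 : ℤ_[p] ⧸ I) ^ m) *
            (∑ a ∈ Finset.range p, φ (χ (a : ZMod p) * (-1:ℤ_[p]) ^ a * (qnum q a) ^ n))
          + ∑ x ∈ Finset.range p,
              φ (χ ((p * k + x : ℕ) : ZMod p) * (-1:ℤ_[p]) ^ (p * k + x) * (qnum q (p * k + x)) ^ n)
          = (∑ m ∈ Finset.range k, (-1 : ℤ_[p] ⧸ I) ^ m + (-1) ^ k) *
            ∑ a ∈ Finset.range p, φ (χ (a : ZMod p) * (-1:ℤ_[p]) ^ a * (qnum q a) ^ n) := by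
            rw [Finset.sum_congr rfl fun x _ => hterm x, ← Finset.mul_sum]; ring
        _ = _ := by rw [← Finset.sum_range_succ]
  have hpow : p ^ (N + 1) = p * p ^ N := by ring
  rw [hpow, key (p ^ N), neg_one_geom_sum, if_neg (Nat.not_even_iff_odd.mpr hp.pow), one_mul]
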